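/- arXiv:2106.01723 — 4 statements merged into one kernel-verified Lean document; each statement's English description precedes it below -/
import Mathlib

section
/- (Properties of the square loss.) Let M > 0, let P* be a finite measure on 𝒪 = 𝒳 × 𝒜 × 𝒴 where 𝒴 ⊆ [−√M, √M], let 𝓕 be a convex set of measurable functions 𝒳 × 𝒜 → [−√M, √M], let ℓ(f,(x,a,y)) = (y − f(x,a))², let R*(f) = ∫ ℓ(f,o) dP*(o), and let f_1 ∈ argmin_{f∈𝓕} R*(f) (assumed to exist). Then: (i) for all f ∈ 𝓕, ‖ℓ(f,·) − ℓ(f_1,·)‖_{2,g*} ≤ 4√M · (R*(f) − R*(f_1))^{1/2}, where ‖h‖_{2,g*} = (∫ h² dP*)^{1/2}; and (ii) for all f, f' ∈ 𝓕 and all o = (x,a,y) ∈ 𝒪, |ℓ(f,o) − ℓ(f',o)| ≤ 4√M · |f(x,a) − f'(x,a)|. -/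
open MeasureTheory

open MeasureTheory in
lemma aux_quad_sq {Ω : Type*} [MeasurableSpace Ω] (μ : Measure Ω)
    (e g : Ω → ℝ) (hIe2 : Integrable (fun o => e o ^ 2) μ)
    (hIg2 : Integrable (fun o => g o ^ 2) μ)
    (hIeg : Integrable (fun o => e o * g o) μ)
    (hmin : ∀ t : ℝ, t ∈ Set.Icc (0:ℝ) 1 →
      ∫ o, e o ^ 2 ∂μ ≤ ∫ o, (e o - t * g o) ^ 2 ∂μ) :
    ∫ o, g o ^ 2 ∂μ ≤ (∫ o, (e o - g o) ^ 2 ∂μ) - ∫ o, e o ^ 2 ∂μ := by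
  have expand : ∀ t : ℝ, ∫ o, (e o - t * g o) ^ 2 ∂μ
      = (∫ o, e o ^ 2 ∂μ) - 2 * t * (∫ o, e o * g o ∂μ) + t ^ 2 * ∫ o, g o ^ 2 ∂μ := by
    intro t
    have h1 : ∀ o, (e o - t * g o) ^ 2
        = (e o ^ 2 - (2 * t) * (e o * g o)) + t ^ 2 * g o ^ 2 := fun o => by ring
    simp_rw [h1]
    have hA : Integrable (fun o => e o ^ 2 - 2 * t * (e o * g o)) μ :=
      hIe2.sub (hIeg.const_mul (2 * t))
    have hB : Integrable (fun o => t ^ 2 * g o ^ 2) μ := hIg2.const_mul (t ^ 2)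
    have hC : Integrable (fun o => 2 * t * (e o * g o)) μ := hIeg.const_mul (2 * t)
    rw [integral_add hA hB, integral_sub hIe2 hC, integral_const_mul, integral_const_mul]
  set I := ∫ o, e o * g o ∂μ with hI_def
  set J := ∫ o, g o ^ 2 ∂μ with hJ_def
  have hJ : 0 ≤ J := integral_nonneg fun o => sq_nonneg _
  have hstep : ∀ t : ℝ, t ∈ Set.Icc (0:ℝ) 1 → 2 * t * I ≤ t ^ 2 * J := by
    intro t ht
    have h := hmin t ht
    rw [expand t] at h
    linarith
  have hI0 : 2 * I ≤ 0 := by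
    by_contra hcon
    push_neg at hcon
    have hIpos : 0 < I := by linarith
    set t := min 1 (I / (J + 1)) with ht_def
    have ht0 : 0 < t := lt_min one_pos (div_pos hIpos (by linarith))
    have ht1 : t ≤ 1 := min_le_left _ _
    have htJ : t * J ≤ I := by
      have h2 : t ≤ I / (J + 1) := min_le_right _ _
      calc t * J ≤ (I / (J + 1)) * J := mul_le_mul_of_nonneg_right h2 hJ
        _ ≤ I := by
            rw [div_mul_eq_mul_div, div_le_iff₀ (by linarith)]
            nlinarith
    have h3 := hstep t ⟨ht0.le, ht1⟩
    nlinarith [mul_le_mul_of_nonneg_left htJ ht0.le, mul_pos ht0 hIpos]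
  have e1 := expand 1
  simp only [one_mul, one_pow, mul_one] at e1
  rw [e1]
  linarith


/-- **Properties of the square loss.**

Let `M > 0`, `𝒴 ⊆ [−√M, √M]`, `P*` a finite measure on `𝒪 = 𝒳 × 𝒜 × 𝒴`, `𝓕` a convex set
of measurable functions `𝒳 × 𝒜 → [−√M, √M]`, `ℓ(f,(x,a,y)) = (y − f(x,a))²`,
`R*(f) = ∫ ℓ(f,o) dP*(o)` and `f₁ ∈ argmin_{f∈𝓕} R*(f)`. Then
(i) `‖ℓ(f,·) − ℓ(f₁,·)‖_{2,g*} ≤ 4√M (R*(f) − R*(f₁))^{1/2}` for all `f ∈ 𝓕`, and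
(ii) `|ℓ(f,o) − ℓ(f',o)| ≤ 4√M |f(x,a) − f'(x,a)|` for all `f, f' ∈ 𝓕`, `o ∈ 𝒪`. -/
theorem square_loss_properties
    (𝒳 𝒜 : Type) [m𝒳 : MeasurableSpace 𝒳] [m𝒜 : MeasurableSpace 𝒜]
    (M : ℝ) (hM : 0 < M)
    (𝒴 : Set ℝ) (h𝒴 : 𝒴 ⊆ Set.Icc (-Real.sqrt M) (Real.sqrt M))
    (Pstar : Measure (𝒳 × 𝒜 × 𝒴)) [IsFiniteMeasure Pstar]
    (F : Set (𝒳 × 𝒜 → ℝ))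
    (hFconv : Convex ℝ F)
    (hFmeas : ∀ f ∈ F, Measurable f)
    (hFbdd : ∀ f ∈ F, ∀ z : 𝒳 × 𝒜, f z ∈ Set.Icc (-Real.sqrt M) (Real.sqrt M))
    (f1 : 𝒳 × 𝒜 → ℝ) (hf1F : f1 ∈ F)
    (hf1min : ∀ f ∈ F,
      (∫ o : 𝒳 × 𝒜 × 𝒴, ((o.2.2 : ℝ) - f1 (o.1, o.2.1)) ^ 2 ∂Pstar)
        ≤ ∫ o : 𝒳 × 𝒜 × 𝒴, ((o.2.2 : ℝ) - f (o.1, o.2.1)) ^ 2 ∂Pstar) :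
    -- (i) the variance bound
    (∀ f ∈ F,
      Real.sqrt (∫ o : 𝒳 × 𝒜 × 𝒴,
          (((o.2.2 : ℝ) - f (o.1, o.2.1)) ^ 2 - ((o.2.2 : ℝ) - f1 (o.1, o.2.1)) ^ 2) ^ 2
          ∂Pstar)
        ≤ 4 * Real.sqrt M *
          ((∫ o : 𝒳 × 𝒜 × 𝒴, ((o.2.2 : ℝ) - f (o.1, o.2.1)) ^ 2 ∂Pstar)
            - ∫ o : 𝒳 × 𝒜 × 𝒴, ((o.2.2 : ℝ) - f1 (o.1, o.2.1)) ^ 2 ∂Pstar) ^ (1/2 : ℝ)) ∧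
    -- (ii) the Lipschitz property
    (∀ f ∈ F, ∀ f' ∈ F, ∀ o : 𝒳 × 𝒜 × 𝒴,
      |((o.2.2 : ℝ) - f (o.1, o.2.1)) ^ 2 - ((o.2.2 : ℝ) - f' (o.1, o.2.1)) ^ 2|
        ≤ 4 * Real.sqrt M * |f (o.1, o.2.1) - f' (o.1, o.2.1)|) := by
  set s := Real.sqrt M with hs_def
  have hs : 0 ≤ s := Real.sqrt_nonneg M
  have hs2 : s ^ 2 = M := Real.sq_sqrt hM.le
  have key : ∀ a b c : ℝ, |a| ≤ s → |b| ≤ s → |c| ≤ s →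
      |(c - a) ^ 2 - (c - b) ^ 2| ≤ 4 * s * |a - b| := by
    intro a b c ha hb hc
    have h1 : (c - a) ^ 2 - (c - b) ^ 2 = (a - b) * (a + b - 2 * c) := by ring
    rw [h1, abs_mul]
    have ha' := abs_le.mp ha
    have hb' := abs_le.mp hb
    have hc' := abs_le.mp hc
    have h2 : |a + b - 2 * c| ≤ 4 * s := abs_le.mpr ⟨by linarith, by linarith⟩
    calc |a - b| * |a + b - 2 * c| ≤ |a - b| * (4 * s) :=
          mul_le_mul_of_nonneg_left h2 (abs_nonneg _)
      _ = 4 * s * |a - b| := by ring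
  have hys : ∀ o : 𝒳 × 𝒜 × 𝒴, |(o.2.2 : ℝ)| ≤ s :=
    fun o => abs_le.mpr (Set.mem_Icc.mp (h𝒴 o.2.2.2))
  have hmy : Measurable fun o : 𝒳 × 𝒜 × 𝒴 => (o.2.2 : ℝ) :=
    measurable_subtype_coe.comp (measurable_snd.comp measurable_snd)
  have hmproj : Measurable fun o : 𝒳 × 𝒜 × 𝒴 => (o.1, o.2.1) :=
    measurable_fst.prodMk (measurable_fst.comp measurable_snd)
  have hInt : ∀ (u : 𝒳 × 𝒜 × 𝒴 → ℝ) (C : ℝ), Measurable u → (∀ o, |u o| ≤ C) →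
      Integrable u Pstar := fun u C hm hb =>
    (integrable_const C).mono' hm.aestronglyMeasurable (ae_of_all _ fun o => by
      simpa using hb o)
  constructor
  · -- part (i)
    intro f hf
    set g : 𝒳 × 𝒜 × 𝒴 → ℝ := fun o => f (o.1, o.2.1) - f1 (o.1, o.2.1) with hg_def
    set e : 𝒳 × 𝒜 × 𝒴 → ℝ := fun o => (o.2.2 : ℝ) - f1 (o.1, o.2.1) with he_def
    have hmf : Measurable fun o : 𝒳 × 𝒜 × 𝒴 => f (o.1, o.2.1) := (hFmeas f hf).comp hmproj
    have hmf1 : Measurable fun o : 𝒳 × 𝒜 × 𝒴 => f1 (o.1, o.2.1) := (hFmeas f1 hf1F).comp hmproj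
    have hbf : ∀ o : 𝒳 × 𝒜 × 𝒴, |f (o.1, o.2.1)| ≤ s :=
      fun o => abs_le.mpr (Set.mem_Icc.mp (hFbdd f hf (o.1, o.2.1)))
    have hbf1 : ∀ o : 𝒳 × 𝒜 × 𝒴, |f1 (o.1, o.2.1)| ≤ s :=
      fun o => abs_le.mpr (Set.mem_Icc.mp (hFbdd f1 hf1F (o.1, o.2.1)))
    have hmg : Measurable g := hmf.sub hmf1
    have hme : Measurable e := hmy.sub hmf1
    have hbg : ∀ o, |g o| ≤ 2 * s := by
      intro o
      have h1 := abs_le.mp (hbf o)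
      have h2 := abs_le.mp (hbf1 o)
      exact abs_le.mpr ⟨by simp only [hg_def]; linarith, by simp only [hg_def]; linarith⟩
    have hbe : ∀ o, |e o| ≤ 2 * s := by
      intro o
      have h1 := abs_le.mp (hys o)
      have h2 := abs_le.mp (hbf1 o)
      exact abs_le.mpr ⟨by simp only [he_def]; linarith, by simp only [he_def]; linarith⟩
    have hIg2 : Integrable (fun o => g o ^ 2) Pstar := by
      refine hInt _ ((2 * s) ^ 2) (hmg.pow_const 2) fun o => ?_
      rw [abs_pow]
      exact pow_le_pow_left₀ (abs_nonneg _) (hbg o) 2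
    have hIe2 : Integrable (fun o => e o ^ 2) Pstar := by
      refine hInt _ ((2 * s) ^ 2) (hme.pow_const 2) fun o => ?_
      rw [abs_pow]
      exact pow_le_pow_left₀ (abs_nonneg _) (hbe o) 2
    have hIeg : Integrable (fun o => e o * g o) Pstar := by
      refine hInt _ ((2 * s) * (2 * s)) (hme.mul hmg) fun o => ?_
      rw [abs_mul]
      exact mul_le_mul (hbe o) (hbg o) (abs_nonneg _) (by linarith)
    have hminS : ∀ t : ℝ, t ∈ Set.Icc (0:ℝ) 1 →
        ∫ o, e o ^ 2 ∂Pstar ≤ ∫ o, (e o - t * g o) ^ 2 ∂Pstar := by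
      intro t ht
      have hmem : (1 - t) • f1 + t • f ∈ F :=
        hFconv hf1F hf (show (0:ℝ) ≤ 1 - t by linarith [ht.2]) ht.1 (by ring)
      have h := hf1min _ hmem
      calc ∫ o, e o ^ 2 ∂Pstar
          = ∫ o : 𝒳 × 𝒜 × 𝒴, ((o.2.2 : ℝ) - f1 (o.1, o.2.1)) ^ 2 ∂Pstar := by
            simp only [he_def]
        _ ≤ ∫ o : 𝒳 × 𝒜 × 𝒴,
              ((o.2.2 : ℝ) - ((1 - t) • f1 + t • f) (o.1, o.2.1)) ^ 2 ∂Pstar := h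
        _ = ∫ o, (e o - t * g o) ^ 2 ∂Pstar := by
            congr 1
            funext o
            simp only [he_def, hg_def, Pi.add_apply, Pi.smul_apply, smul_eq_mul]
            ring
    have hcore := aux_quad_sq Pstar e g hIe2 hIg2 hIeg hminS
    have hef : (∫ o, (e o - g o) ^ 2 ∂Pstar)
        = ∫ o : 𝒳 × 𝒜 × 𝒴, ((o.2.2 : ℝ) - f (o.1, o.2.1)) ^ 2 ∂Pstar := by
      congr 1
      funext o
      simp only [he_def, hg_def]
      ring
    have he1 : (∫ o, e o ^ 2 ∂Pstar)
        = ∫ o : 𝒳 × 𝒜 × 𝒴, ((o.2.2 : ℝ) - f1 (o.1, o.2.1)) ^ 2 ∂Pstar := by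
      simp only [he_def]
    set D := (∫ o : 𝒳 × 𝒜 × 𝒴, ((o.2.2 : ℝ) - f (o.1, o.2.1)) ^ 2 ∂Pstar)
      - ∫ o : 𝒳 × 𝒜 × 𝒴, ((o.2.2 : ℝ) - f1 (o.1, o.2.1)) ^ 2 ∂Pstar with hD_def
    have hD : 0 ≤ D := sub_nonneg.mpr (hf1min f hf)
    have hcore' : ∫ o, g o ^ 2 ∂Pstar ≤ D := by
      rw [hD_def, ← hef, ← he1]; exact hcore
    have hsqptw : ∀ o : 𝒳 × 𝒜 × 𝒴,
        (((o.2.2 : ℝ) - f (o.1, o.2.1)) ^ 2 - ((o.2.2 : ℝ) - f1 (o.1, o.2.1)) ^ 2) ^ 2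
          ≤ 16 * M * g o ^ 2 := by
      intro o
      have h := key (f (o.1, o.2.1)) (f1 (o.1, o.2.1)) ((o.2.2 : ℝ)) (hbf o) (hbf1 o) (hys o)
      have hga : g o = f (o.1, o.2.1) - f1 (o.1, o.2.1) := by simp only [hg_def]
      rw [hga]
      nlinarith [sq_abs (((o.2.2 : ℝ) - f (o.1, o.2.1)) ^ 2 - ((o.2.2 : ℝ) - f1 (o.1, o.2.1)) ^ 2),
        sq_abs (f (o.1, o.2.1) - f1 (o.1, o.2.1)),
        abs_nonneg (((o.2.2 : ℝ) - f (o.1, o.2.1)) ^ 2 - ((o.2.2 : ℝ) - f1 (o.1, o.2.1)) ^ 2),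
        abs_nonneg (f (o.1, o.2.1) - f1 (o.1, o.2.1))]
    have hIineq : (∫ o : 𝒳 × 𝒜 × 𝒴,
        (((o.2.2 : ℝ) - f (o.1, o.2.1)) ^ 2 - ((o.2.2 : ℝ) - f1 (o.1, o.2.1)) ^ 2) ^ 2 ∂Pstar)
        ≤ 16 * M * ∫ o, g o ^ 2 ∂Pstar := by
      have h := integral_mono_of_nonneg (μ := Pstar)
        (ae_of_all _ fun o => sq_nonneg
          (((o.2.2 : ℝ) - f (o.1, o.2.1)) ^ 2 - ((o.2.2 : ℝ) - f1 (o.1, o.2.1)) ^ 2))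
        (hIg2.const_mul (16 * M)) (ae_of_all _ hsqptw)
      rwa [integral_const_mul] at h
    have hchain : (∫ o : 𝒳 × 𝒜 × 𝒴,
        (((o.2.2 : ℝ) - f (o.1, o.2.1)) ^ 2 - ((o.2.2 : ℝ) - f1 (o.1, o.2.1)) ^ 2) ^ 2 ∂Pstar)
        ≤ 16 * M * D := by
      have h2 : 16 * M * (∫ o, g o ^ 2 ∂Pstar) ≤ 16 * M * D :=
        mul_le_mul_of_nonneg_left hcore' (by linarith)
      linarith
    calc Real.sqrt (∫ o : 𝒳 × 𝒜 × 𝒴,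
          (((o.2.2 : ℝ) - f (o.1, o.2.1)) ^ 2 - ((o.2.2 : ℝ) - f1 (o.1, o.2.1)) ^ 2) ^ 2 ∂Pstar)
        ≤ Real.sqrt (16 * M * D) := Real.sqrt_le_sqrt hchain
      _ = 4 * s * D ^ (1/2 : ℝ) := by
          rw [Real.sqrt_mul (by positivity) D, ← Real.sqrt_eq_rpow]
          congr 1
          rw [show (16 : ℝ) * M = (4 * s) ^ 2 by nlinarith, Real.sqrt_sq (by linarith)]
  · -- part (ii)
    intro f hf f' hf' o
    exact key (f (o.1, o.2.1)) (f' (o.1, o.2.1)) ((o.2.2 : ℝ))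
      (abs_le.mpr (Set.mem_Icc.mp (hFbdd f hf (o.1, o.2.1))))
      (abs_le.mpr (Set.mem_Icc.mp (hFbdd f' hf' (o.1, o.2.1))))
      (hys o)
end

section
/- Let P* be a finite measure on 𝒪 = 𝒳 × 𝒜 × 𝒴 with 𝒴 ⊆ ℝ and ∫ y² dP*(x,a,y) < ∞. Let μ : 𝒳 × 𝒜 → ℝ be a version of the conditional expectation of the coordinate y given (x,a) under P*. Let 𝓕 be a convex set of measurable functions 𝒳 × 𝒜 → ℝ, each square-integrable with respect to P* (as functions of (x,a)), and let f_1 ∈ argmin_{f∈𝓕} R*(f), where R*(f) = ∫ (y − f(x,a))² dP*(x,a,y). Then for every f ∈ 𝓕: R*(f) − R*(f_1) ≥ ∫ (f(x,a) − f_1(x,a))² dP*(x,a,y). -/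
/-! The minimizer `g₁` of `g ↦ ‖Y - g‖²` over a convex set `S` of `L²` functions is the
projection of `Y` onto `S`. Moving from `g₁` towards `g ∈ S` by `t ∈ (0, 1]` cannot decrease the
risk, i.e. `2t⟪Y - g₁, g - g₁⟫ ≤ t²‖g - g₁‖²`; letting `t → 0` gives `⟪Y - g₁, g - g₁⟫ ≤ 0`, and
then `‖Y - g‖² = ‖Y - g₁‖² - 2⟪Y - g₁, g - g₁⟫ + ‖g - g₁‖² ≥ ‖Y - g₁‖² + ‖g - g₁‖²`. The
theorem is the case `Y = y` and `S = {f ∘ (x, a) : f ∈ 𝓕}`. -/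

open MeasureTheory Filter Topology

lemma nonpos_of_forall_le_mul {a b : ℝ} (h : ∀ t : ℝ, 0 < t → t ≤ 1 → b ≤ t * a) : b ≤ 0 := by
  have hlim : Tendsto (fun t : ℝ => t * a) (𝓝 0) (𝓝 0) := by
    simpa using (tendsto_id (x := 𝓝 (0 : ℝ))).mul_const a
  refine ge_of_tendsto (hlim.mono_left (nhdsWithin_le_nhds (s := Set.Ioi 0))) ?_
  filter_upwards [Ioc_mem_nhdsGT one_pos] with t ht using h t ht.1 ht.2

section

variable {Ω : Type*} [MeasurableSpace Ω] {ν : Measure Ω}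

lemma integral_sub_mul_sq {E G : Ω → ℝ} (hE : MemLp E 2 ν) (hG : MemLp G 2 ν) (t : ℝ) :
    ∫ ω, (E ω - t * G ω) ^ 2 ∂ν
      = ∫ ω, E ω ^ 2 ∂ν - 2 * t * ∫ ω, E ω * G ω ∂ν + t ^ 2 * ∫ ω, G ω ^ 2 ∂ν := by
  have hEG : Integrable (fun ω => E ω * G ω) ν := hE.integrable_mul hG
  have hlin : Integrable (fun ω => E ω ^ 2 - 2 * t * (E ω * G ω)) ν :=
    hE.integrable_sq.sub (hEG.const_mul _)
  have hexpand : (fun ω => (E ω - t * G ω) ^ 2)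
      = fun ω => (E ω ^ 2 - 2 * t * (E ω * G ω)) + t ^ 2 * G ω ^ 2 := by
    funext ω; ring
  rw [hexpand, integral_add hlin (hG.integrable_sq.const_mul _),
    integral_sub hE.integrable_sq (hEG.const_mul _), integral_const_mul, integral_const_mul]

theorem integral_sq_sub_le_of_isMinOn {Y g₁ : Ω → ℝ} {S : Set (Ω → ℝ)} (hS : Convex ℝ S)
    (hS2 : ∀ g ∈ S, MemLp g 2 ν) (hY : MemLp Y 2 ν) (hg₁ : g₁ ∈ S)
    (hmin : IsMinOn (fun g => ∫ ω, (Y ω - g ω) ^ 2 ∂ν) S g₁) {g : Ω → ℝ} (hg : g ∈ S) :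
    ∫ ω, (g ω - g₁ ω) ^ 2 ∂ν ≤ ∫ ω, (Y ω - g ω) ^ 2 ∂ν - ∫ ω, (Y ω - g₁ ω) ^ 2 ∂ν := by
  have hE : MemLp (fun ω => Y ω - g₁ ω) 2 ν := hY.sub (hS2 g₁ hg₁)
  have hG : MemLp (fun ω => g ω - g₁ ω) 2 ν := (hS2 g hg).sub (hS2 g₁ hg₁)
  have hrisk (t : ℝ) : ∫ ω, (Y ω - ((1 - t) • g₁ + t • g) ω) ^ 2 ∂ν
      = ∫ ω, (Y ω - g₁ ω) ^ 2 ∂ν - 2 * t * ∫ ω, (Y ω - g₁ ω) * (g ω - g₁ ω) ∂ν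
        + t ^ 2 * ∫ ω, (g ω - g₁ ω) ^ 2 ∂ν := by
    rw [← integral_sub_mul_sq hE hG]
    congr 1; funext ω; simp only [Pi.add_apply, Pi.smul_apply, smul_eq_mul]; ring
  have hcross : 2 * ∫ ω, (Y ω - g₁ ω) * (g ω - g₁ ω) ∂ν ≤ 0 := by
    refine nonpos_of_forall_le_mul (a := ∫ ω, (g ω - g₁ ω) ^ 2 ∂ν) fun t ht0 ht1 => ?_
    have hmem : (1 - t) • g₁ + t • g ∈ S := hS hg₁ hg (by linarith) ht0.le (by ring)
    have hdesc := hmin hmem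
    simp only [Set.mem_ofPred_eq, hrisk] at hdesc
    nlinarith
  have hendpoint := hrisk 1
  rw [show (1 - 1 : ℝ) • g₁ + (1 : ℝ) • g = g by simp] at hendpoint
  linarith

end

theorem excess_risk_dominates_L2_distance_general
    (𝒳 𝒜 : Type) [m𝒳 : MeasurableSpace 𝒳] [m𝒜 : MeasurableSpace 𝒜]
    (Pstar : Measure (𝒳 × 𝒜 × ℝ))
    -- square-integrable outcome
    (hy2 : Integrable (fun o : 𝒳 × 𝒜 × ℝ => o.2.2 ^ 2) Pstar)
    -- the convex hypothesis class of square-integrable measurable functions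
    (F : Set (𝒳 × 𝒜 → ℝ))
    (hFconv : Convex ℝ F)
    (hFmeas : ∀ f ∈ F, Measurable f)
    (hF2 : ∀ f ∈ F, Integrable (fun o : 𝒳 × 𝒜 × ℝ => (f (o.1, o.2.1)) ^ 2) Pstar)
    -- the population risk minimizer f₁
    (f1 : 𝒳 × 𝒜 → ℝ) (hf1F : f1 ∈ F)
    (hf1min : ∀ f ∈ F,
      (∫ o : 𝒳 × 𝒜 × ℝ, (o.2.2 - f1 (o.1, o.2.1)) ^ 2 ∂Pstar)
        ≤ ∫ o : 𝒳 × 𝒜 × ℝ, (o.2.2 - f (o.1, o.2.1)) ^ 2 ∂Pstar) :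
    ∀ f ∈ F,
      (∫ o : 𝒳 × 𝒜 × ℝ, (f (o.1, o.2.1) - f1 (o.1, o.2.1)) ^ 2 ∂Pstar)
        ≤ (∫ o : 𝒳 × 𝒜 × ℝ, (o.2.2 - f (o.1, o.2.1)) ^ 2 ∂Pstar)
          - ∫ o : 𝒳 × 𝒜 × ℝ, (o.2.2 - f1 (o.1, o.2.1)) ^ 2 ∂Pstar := by
  intro f hf
  let π : 𝒳 × 𝒜 × ℝ → 𝒳 × 𝒜 := fun o => (o.1, o.2.1)
  have hπ : Measurable π := by fun_prop
  have hS2 : ∀ g ∈ LinearMap.funLeft ℝ ℝ π '' F, MemLp g 2 Pstar := by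
    rintro _ ⟨f, hf, rfl⟩
    exact (memLp_two_iff_integrable_sq ((hFmeas f hf).comp hπ).aestronglyMeasurable).2 (hF2 f hf)
  have hY : MemLp (fun o : 𝒳 × 𝒜 × ℝ => o.2.2) 2 Pstar :=
    (memLp_two_iff_integrable_sq
      (by fun_prop : Measurable fun o : 𝒳 × 𝒜 × ℝ => o.2.2).aestronglyMeasurable).2 hy2
  exact integral_sq_sub_le_of_isMinOn (hFconv.linear_image _) hS2 hY ⟨f1, hf1F, rfl⟩
    (by rintro _ ⟨f, hf, rfl⟩; exact hf1min f hf) ⟨f, hf, rfl⟩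

/-- **Excess squared-error risk dominates squared distance to the minimizer.**

If `P*` is a finite measure on `𝒳 × 𝒜 × 𝒴` (`𝒴 ⊆ ℝ`) with square-integrable outcome, `μ`
is a version of the conditional expectation of `y` given `(x,a)`, `𝓕` is a convex set of
square-integrable measurable functions and `f₁ ∈ argmin_{f∈𝓕} R*(f)` for the squared-error
risk `R*(f) = ∫ (y − f(x,a))² dP*`, then for every `f ∈ 𝓕`,
`R*(f) − R*(f₁) ≥ ∫ (f − f₁)² dP*`. -/
theorem excess_risk_dominates_L2_distance
    (𝒳 𝒜 : Type) [m𝒳 : MeasurableSpace 𝒳] [m𝒜 : MeasurableSpace 𝒜]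
    (Pstar : Measure (𝒳 × 𝒜 × ℝ)) [IsFiniteMeasure Pstar]
    -- square-integrable outcome
    (hy2 : Integrable (fun o : 𝒳 × 𝒜 × ℝ => o.2.2 ^ 2) Pstar)
    -- μ, a version of the conditional expectation of y given (x,a) under P*
    (μ : 𝒳 × 𝒜 → ℝ) (hμmeas : Measurable μ)
    (hμ2 : Integrable (fun o : 𝒳 × 𝒜 × ℝ => (μ (o.1, o.2.1)) ^ 2) Pstar)
    (hμcond : ∀ h : 𝒳 × 𝒜 → ℝ, Measurable h → (∀ z, |h z| ≤ 1) →
      ∫ o : 𝒳 × 𝒜 × ℝ, o.2.2 * h (o.1, o.2.1) ∂Pstar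
        = ∫ o : 𝒳 × 𝒜 × ℝ, μ (o.1, o.2.1) * h (o.1, o.2.1) ∂Pstar)
    -- the convex hypothesis class of square-integrable measurable functions
    (F : Set (𝒳 × 𝒜 → ℝ))
    (hFconv : Convex ℝ F)
    (hFmeas : ∀ f ∈ F, Measurable f)
    (hF2 : ∀ f ∈ F, Integrable (fun o : 𝒳 × 𝒜 × ℝ => (f (o.1, o.2.1)) ^ 2) Pstar)
    -- the population risk minimizer f₁
    (f1 : 𝒳 × 𝒜 → ℝ) (hf1F : f1 ∈ F)
    (hf1min : ∀ f ∈ F,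
      (∫ o : 𝒳 × 𝒜 × ℝ, (o.2.2 - f1 (o.1, o.2.1)) ^ 2 ∂Pstar)
        ≤ ∫ o : 𝒳 × 𝒜 × ℝ, (o.2.2 - f (o.1, o.2.1)) ^ 2 ∂Pstar) :
    ∀ f ∈ F,
      (∫ o : 𝒳 × 𝒜 × ℝ, (f (o.1, o.2.1) - f1 (o.1, o.2.1)) ^ 2 ∂Pstar)
        ≤ (∫ o : 𝒳 × 𝒜 × ℝ, (o.2.2 - f (o.1, o.2.1)) ^ 2 ∂Pstar)
          - ∫ o : 𝒳 × 𝒜 × ℝ, (o.2.2 - f1 (o.1, o.2.1)) ^ 2 ∂Pstar :=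
  excess_risk_dominates_L2_distance_general 𝒳 𝒜 (m𝒳 := m𝒳) (m𝒜 := m𝒜) Pstar hy2 F hFconv hFmeas hF2
    f1 hf1F hf1min
end

section
/- (Variance bound from the margin condition.) For every ν ∈ (0,∞), κ > 0 and finite action set 𝒜 there exists a constant C > 0 depending only on ν, κ and |𝒜| such that the following holds. In the policy-learning setting, let μ(x,a) = ∫ y K((x,a), dy), μ*(x) = min_{a∈𝒜} μ(x,a), and let a* : 𝒳 → 𝒜 be a measurable selection with μ(x, a*(x)) = μ*(x). Suppose the margin assumption holds with parameters ν and κ, and suppose the realizability condition min_{f∈𝓕} R*(f) = ∫ μ*(x) dμ_X(x) holds, attained at some f_1 ∈ 𝓕. Then for every f ∈ 𝓕: ‖ℓ(f,·) − ℓ(f_1,·)‖_{2,g*} ≤ C · M · ( (R*(f) − R*(f_1)) / M )^{ν / (2(ν+1))}, i.e., the variance bound holds with exponent α = ν/(ν+1) and envelope equal to the constant M. -/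
open MeasureTheory Finset ProbabilityTheory

/-!
Realizability forces `f₁` to play `a*(x)` almost surely: its regret
`∑ₐ (μ(x,a) − μ*(x)) f₁(x,a)` integrates to zero, and the margin assumption at `u = 0` says
that ties `μ(x,a) = μ*(x)` with `a ≠ a*(x)` are null. Since `|y| ≤ M`, the squared loss
difference is then at most `2M² 𝔼[1 − f(x,a*(x))]`. Where every suboptimal gap exceeds `Mu`,
`1 − f(x,a*(x)) ≤ regret_f(x)/(Mu)`; elsewhere it is at most one, on a set of mass at most
`(κu)^ν`. Hence `𝔼[1 − f(x,a*(x))] ≤ (κu)^ν + (R*(f) − R*(f₁))/(Mu)` for every `u > 0`, and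
optimizing in `u` gives the exponent `ν/(ν+1)` before the square root.
-/

namespace PolicyLearning

section Pointwise

variable {A : Type*} [Fintype A] {m p : A → ℝ} {a₀ : A}

theorem sum_mul_sub_eq_sum_sub_mul (hp : ∑ a, p a = 1) :
    ∑ a, m a * p a - m a₀ = ∑ a, (m a - m a₀) * p a := by
  simp only [sub_mul, sum_sub_distrib, ← mul_sum, hp, mul_one]

theorem one_sub_le_sum_sub_mul_div {t : ℝ} (ht : 0 < t) (hm : ∀ a ≠ a₀, t < m a - m a₀)
    (hp0 : ∀ a, 0 ≤ p a) (hp : ∑ a, p a = 1) :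
    1 - p a₀ ≤ (∑ a, (m a - m a₀) * p a) / t := by
  classical
  have hrest : 1 - p a₀ = ∑ a ∈ univ.erase a₀, p a := by
    rw [← hp, ← add_sum_erase _ _ (mem_univ a₀), add_sub_cancel_left]
  rw [le_div_iff₀ ht, hrest, sum_mul,
    ← sum_erase univ (f := fun a => (m a - m a₀) * p a) (by rw [sub_self, zero_mul])]
  exact sum_le_sum fun a ha => by
    rw [mul_comm]
    exact mul_le_mul_of_nonneg_right (hm a (ne_of_mem_erase ha)).le (hp0 a)

variable [DecidableEq A]

theorem eq_single_of_sum_sub_mul_eq_zero (hm : ∀ a ≠ a₀, m a₀ < m a) (hp0 : ∀ a, 0 ≤ p a)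
    (hp : ∑ a, p a = 1) (h : ∑ a, (m a - m a₀) * p a = 0) : p = Pi.single a₀ 1 := by
  have hgap : ∀ a, 0 ≤ m a - m a₀ := fun a => by
    rcases eq_or_ne a a₀ with rfl | ha
    · rw [sub_self]
    · exact (sub_pos.2 (hm a ha)).le
  have hzero : ∀ a ≠ a₀, p a = 0 := fun a ha =>
    ((mul_eq_zero.1 ((sum_eq_zero_iff_of_nonneg fun b _ => mul_nonneg (hgap b) (hp0 b)).1 h a
      (mem_univ a))).resolve_left (sub_pos.2 (hm a ha)).ne')
  have hone : p a₀ = 1 := by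
    rwa [sum_eq_single a₀ (fun a _ ha => hzero a ha) (by simp)] at hp
  ext a
  rcases eq_or_ne a a₀ with rfl | ha
  · simp [hone]
  · simp [hzero a ha, ha]

theorem sum_sq_sub_single_le (hp0 : ∀ a, 0 ≤ p a) (hp : ∑ a, p a = 1) :
    ∑ a, (p a - (Pi.single a₀ 1 : A → ℝ) a) ^ 2 ≤ 2 * (1 - p a₀) := by
  have hle : ∀ a, p a ≤ 1 := fun a => hp ▸ single_le_sum (fun b _ => hp0 b) (mem_univ a)
  have hrest : ∑ a ∈ univ.erase a₀, p a = 1 - p a₀ := by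
    rw [← hp, ← add_sum_erase _ _ (mem_univ a₀), add_sub_cancel_left]
  have hsq : ∑ a ∈ univ.erase a₀, (p a - (Pi.single a₀ 1 : A → ℝ) a) ^ 2 ≤
      ∑ a ∈ univ.erase a₀, p a :=
    sum_le_sum fun a ha => by
      rw [Pi.single_eq_of_ne (ne_of_mem_erase ha), sub_zero]
      nlinarith [hp0 a, hle a]
  rw [← add_sum_erase _ _ (mem_univ a₀), Pi.single_eq_same]
  nlinarith [hp0 a₀, hle a₀]

end Pointwise

theorem le_two_mul_rpow_of_forall_le_rpow_add_div {ν κ s V : ℝ} (hν : 0 < ν) (hκ : 0 < κ)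
    (hs : 0 ≤ s) (h : ∀ u, 0 < u → V ≤ (κ * u) ^ ν + s / u) :
    V ≤ 2 * (κ * s) ^ (ν / (ν + 1)) := by
  rcases hs.eq_or_lt with rfl | hs
  · rw [mul_zero, Real.zero_rpow (by positivity), mul_zero]
    by_contra! hV
    have := h ((V / 2) ^ ν⁻¹ / κ) (by positivity)
    rw [mul_div_cancel₀ _ hκ.ne', Real.rpow_inv_rpow (by positivity) hν.ne', zero_div,
      add_zero] at this
    linarith
  · have hκs : 0 < κ * s := by positivity
    -- the choice `κ u = (κ s) ^ (1 / (ν + 1))` balances the two terms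
    have hu := h ((κ * s) ^ (ν + 1)⁻¹ / κ) (by positivity)
    have hexp : ν / (ν + 1) = 1 - (ν + 1)⁻¹ := by field_simp; ring
    have h₁ : (κ * ((κ * s) ^ (ν + 1)⁻¹ / κ)) ^ ν = (κ * s) ^ (ν / (ν + 1)) := by
      rw [mul_div_cancel₀ _ hκ.ne', ← Real.rpow_mul hκs.le, inv_mul_eq_div]
    have h₂ : s / ((κ * s) ^ (ν + 1)⁻¹ / κ) = (κ * s) ^ (ν / (ν + 1)) := by
      rw [hexp, Real.rpow_sub hκs, Real.rpow_one, div_div_eq_mul_div, mul_comm s κ]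
    linarith

theorem sqrt_sq_mul_rpow {c x ν : ℝ} (hc : 0 ≤ c) (hx : 0 ≤ x) :
    √(c ^ 2 * x ^ (ν / (ν + 1))) = c * x ^ (ν / (2 * (ν + 1))) := by
  rw [Real.sqrt_mul (sq_nonneg c), Real.sqrt_sq hc, Real.sqrt_eq_rpow, ← Real.rpow_mul hx]
  congr 2
  field_simp

theorem abs_integral_id_le {ν : Measure ℝ} [IsProbabilityMeasure ν] {M : ℝ}
    (h : ∀ᵐ y ∂ν, |y| ≤ M) : |∫ y, y ∂ν| ≤ M := by
  simpa using norm_integral_le_of_norm_le_const (μ := ν) (f := id) (by simpa using h)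

theorem measurable_integral_id {Z : Type*} [MeasurableSpace Z] (K : Kernel Z ℝ)
    [IsSFiniteKernel K] : Measurable fun z => ∫ y, y ∂K z :=
  (measurable_snd.stronglyMeasurable.integral_kernel_prod_right' (κ := K)).measurable

variable {X A : Type*} [MeasurableSpace X]

def marginSet (m : X × A → ℝ) (a₀ : X → A) (t : ℝ) : Set X :=
  {x | ∃ a, a ≠ a₀ x ∧ m (x, a) - m (x, a₀ x) ≤ t}

def MarginCondition (μX : Measure X) (m : X × A → ℝ) (a₀ : X → A) (M κ ν : ℝ) : Prop :=
  ∀ u : ℝ, 0 ≤ u → μX (marginSet m a₀ (M * u)) ≤ ENNReal.ofReal ((κ * u) ^ ν)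

theorem MarginCondition.measure_marginSet_zero {μX : Measure X} {m : X × A → ℝ} {a₀ : X → A}
    {M κ ν : ℝ} (h : MarginCondition μX m a₀ M κ ν) (hν : 0 < ν) : μX (marginSet m a₀ 0) = 0 := by
  simpa [Real.zero_rpow hν.ne'] using h 0 le_rfl

variable [MeasurableSpace A]

theorem integrable_comp_prodMk {μX : Measure X} [IsFiniteMeasure μX] {m : X × A → ℝ} {M : ℝ}
    (hm : Measurable m) (hmM : ∀ z, |m z| ≤ M) {a₀ : X → A} (ha₀ : Measurable a₀) :
    Integrable (fun x => m (x, a₀ x)) μX :=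
  .of_bound (hm.comp (measurable_id.prodMk ha₀)).aestronglyMeasurable M (ae_of_all _ fun _ => hmM _)

variable [Fintype A]

structure IsPolicy (p : X × A → ℝ) : Prop where
  measurable : Measurable p
  nonneg : ∀ z, 0 ≤ p z
  sum_eq_one : ∀ x, ∑ a, p (x, a) = 1

namespace IsPolicy

variable {p q : X × A → ℝ}

theorem le_one (hp : IsPolicy p) (z : X × A) : p z ≤ 1 :=
  hp.sum_eq_one z.1 ▸ single_le_sum (fun a _ => hp.nonneg (z.1, a)) (mem_univ z.2)

theorem abs_le_one (hp : IsPolicy p) (z : X × A) : |p z| ≤ 1 :=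
  abs_le.2 ⟨by linarith [hp.nonneg z], hp.le_one z⟩

theorem abs_sub_le_one (hp : IsPolicy p) (hq : IsPolicy q) (z : X × A) : |p z - q z| ≤ 1 :=
  abs_sub_le_iff.2 ⟨by linarith [hp.le_one z, hq.nonneg z], by linarith [hq.le_one z, hp.nonneg z]⟩

end IsPolicy

def regret (m : X × A → ℝ) (a₀ : X → A) (p : X × A → ℝ) (x : X) : ℝ :=
  ∑ a, (m (x, a) - m (x, a₀ x)) * p (x, a)

section Regret

variable {μX : Measure X} [IsProbabilityMeasure μX] {m : X × A → ℝ} {a₀ : X → A} {M : ℝ}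
  {p q : X × A → ℝ}

theorem regret_nonneg (hopt : ∀ x a, m (x, a₀ x) ≤ m (x, a)) (hp : IsPolicy p) (x : X) :
    0 ≤ regret m a₀ p x :=
  sum_nonneg fun a _ => mul_nonneg (sub_nonneg.2 (hopt x a)) (hp.nonneg (x, a))

theorem regret_eq (hp : IsPolicy p) :
    regret m a₀ p = fun x => ∑ a, m (x, a) * p (x, a) - m (x, a₀ x) :=
  funext fun x => (sum_mul_sub_eq_sum_sub_mul (hp.sum_eq_one x)).symm

theorem integrable_sum_mul (hm : Measurable m) (hmM : ∀ z, |m z| ≤ M) (hp : IsPolicy p) :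
    Integrable (fun x => ∑ a, m (x, a) * p (x, a)) μX := by
  have := hp.measurable
  refine integrable_finsetSum _ fun a _ => .of_bound (by fun_prop) M (ae_of_all _ fun x => ?_)
  rw [Real.norm_eq_abs, abs_mul]
  nlinarith [hmM (x, a), hp.abs_le_one (x, a), abs_nonneg (m (x, a)), abs_nonneg (p (x, a))]

theorem integrable_regret (hm : Measurable m) (hmM : ∀ z, |m z| ≤ M) (ha₀ : Measurable a₀)
    (hp : IsPolicy p) : Integrable (regret m a₀ p) μX := by
  rw [regret_eq hp]
  exact (integrable_sum_mul hm hmM hp).sub (integrable_comp_prodMk hm hmM ha₀)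

theorem integral_regret (hm : Measurable m) (hmM : ∀ z, |m z| ≤ M) (ha₀ : Measurable a₀)
    (hp : IsPolicy p) :
    ∫ x, regret m a₀ p x ∂μX = ∫ x, ∑ a, m (x, a) * p (x, a) ∂μX - ∫ x, m (x, a₀ x) ∂μX := by
  rw [regret_eq hp, integral_sub (integrable_sum_mul hm hmM hp) (integrable_comp_prodMk hm hmM ha₀)]

theorem ae_eq_single_of_integral_regret_eq_zero [DecidableEq A] (hm : Measurable m)
    (hmM : ∀ z, |m z| ≤ M) (ha₀ : Measurable a₀) (hopt : ∀ x a, m (x, a₀ x) ≤ m (x, a))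
    (hties : μX (marginSet m a₀ 0) = 0) (hp : IsPolicy p) (h : ∫ x, regret m a₀ p x ∂μX = 0) :
    ∀ᵐ x ∂μX, (fun a => p (x, a)) = Pi.single (a₀ x) 1 := by
  have hzero := (integral_eq_zero_iff_of_nonneg (regret_nonneg hopt hp)
    (integrable_regret hm hmM ha₀ hp)).1 h
  filter_upwards [hzero, measure_eq_zero_iff_ae_notMem.1 hties] with x hx hxt
  refine eq_single_of_sum_sub_mul_eq_zero (fun a ha => ?_) (fun a => hp.nonneg (x, a))
    (hp.sum_eq_one x) hx
  by_contra hle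
  exact hxt ⟨a, ha, by linarith⟩

theorem integral_one_sub_le_measureReal_add (hm : Measurable m) (hmM : ∀ z, |m z| ≤ M)
    (ha₀ : Measurable a₀) (hopt : ∀ x a, m (x, a₀ x) ≤ m (x, a)) (hp : IsPolicy p) {t : ℝ}
    (ht : 0 < t) :
    ∫ x, (1 - p (x, a₀ x)) ∂μX ≤ μX.real (marginSet m a₀ t) + (∫ x, regret m a₀ p x ∂μX) / t := by
  -- `marginSet` need not be measurable: `A` need not have measurable singletons
  set S := toMeasurable μX (marginSet m a₀ t)
  have hS : MeasurableSet S := measurableSet_toMeasurable _ _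
  have hbound : ∀ x, 1 - p (x, a₀ x) ≤ S.indicator 1 x + regret m a₀ p x / t := fun x => by
    by_cases hx : x ∈ S
    · rw [Set.indicator_of_mem hx, Pi.one_apply]
      linarith [hp.nonneg (x, a₀ x), div_nonneg (regret_nonneg hopt hp x) ht.le]
    · rw [Set.indicator_of_notMem hx, zero_add]
      refine one_sub_le_sum_sub_mul_div ht (fun a ha => ?_) (fun a => hp.nonneg (x, a))
        (hp.sum_eq_one x)
      by_contra hle
      exact hx (subset_toMeasurable _ _ ⟨a, ha, not_lt.1 hle⟩)
  have hint : Integrable (regret m a₀ p) μX := integrable_regret hm hmM ha₀ hp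
  have hind : Integrable (S.indicator 1 : X → ℝ) μX := (integrable_const 1).indicator hS
  calc ∫ x, (1 - p (x, a₀ x)) ∂μX ≤ ∫ x, (S.indicator 1 x + regret m a₀ p x / t) ∂μX :=
        integral_mono ((integrable_const 1).sub (integrable_comp_prodMk hp.measurable hp.abs_le_one
          ha₀)) (hind.add (hint.div_const t) :) hbound
    _ = μX.real (marginSet m a₀ t) + (∫ x, regret m a₀ p x ∂μX) / t := by
        rw [integral_add hind (hint.div_const t),
          integral_indicator_one hS, integral_div, measureReal_def, measureReal_def,
          measure_toMeasurable]

theorem MarginCondition.integral_one_sub_le {κ ν : ℝ} (h : MarginCondition μX m a₀ M κ ν)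
    (hν : 0 < ν) (hκ : 0 < κ) (hM : 0 < M) (hm : Measurable m) (hmM : ∀ z, |m z| ≤ M)
    (ha₀ : Measurable a₀) (hopt : ∀ x a, m (x, a₀ x) ≤ m (x, a)) (hp : IsPolicy p) :
    ∫ x, (1 - p (x, a₀ x)) ∂μX ≤
      2 * (κ * ((∫ x, regret m a₀ p x ∂μX) / M)) ^ (ν / (ν + 1)) := by
  refine le_two_mul_rpow_of_forall_le_rpow_add_div hν hκ
    (div_nonneg (integral_nonneg (regret_nonneg hopt hp)) hM.le) fun u hu => ?_
  refine (integral_one_sub_le_measureReal_add hm hmM ha₀ hopt hp (mul_pos hM hu)).trans ?_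
  rw [div_div]
  exact add_le_add (ENNReal.toReal_le_of_le_ofReal (by positivity) (h u hu.le)) le_rfl

theorem integral_sum_sq_sub_le [DecidableEq A] (ha₀ : Measurable a₀) (hp : IsPolicy p)
    (hq : IsPolicy q) (hq₀ : ∀ᵐ x ∂μX, (fun a => q (x, a)) = Pi.single (a₀ x) 1) :
    ∫ x, ∑ a, (p (x, a) - q (x, a)) ^ 2 ∂μX ≤ 2 * ∫ x, (1 - p (x, a₀ x)) ∂μX := by
  have := hp.measurable
  have := hq.measurable
  rw [← integral_const_mul]
  refine integral_mono_ae (integrable_finsetSum _ fun a _ => .of_bound (by fun_prop) 1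
    (ae_of_all _ fun x => ?_)) (((integrable_const 1).sub
      (integrable_comp_prodMk hp.measurable hp.abs_le_one ha₀)).const_mul 2) ?_
  · rw [Real.norm_eq_abs, abs_of_nonneg (sq_nonneg _), ← sq_abs]
    exact pow_le_one₀ (abs_nonneg _) (hp.abs_sub_le_one hq _)
  · filter_upwards [hq₀] with x hx
    simp only [fun a => congrFun hx a]
    exact sum_sq_sub_single_le (fun a => hp.nonneg (x, a)) (hp.sum_eq_one x)

end Regret

def IsReferenceMeasure (μX : Measure X) (K : Kernel (X × A) ℝ) (P : Measure (X × A × ℝ)) : Prop :=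
  ∀ s, MeasurableSet s → P s = ∫⁻ x, ∑ a, K (x, a) {y | (x, a, y) ∈ s} ∂μX

namespace IsReferenceMeasure

variable {μX : Measure X} {K : Kernel (X × A) ℝ} {P : Measure (X × A × ℝ)}

theorem eq_sum_map_compProd [SFinite μX] [IsSFiniteKernel K] (hP : IsReferenceMeasure μX K P) :
    P = ∑ a, (μX ⊗ₘ K.sectL a).map (fun p => (p.1, a, p.2)) := by
  have hemb : ∀ a : A, Measurable fun p : X × ℝ => (p.1, a, p.2) := fun a => by fun_prop
  ext s hs
  have hsummand : ∀ a, (μX ⊗ₘ K.sectL a).map (fun p => (p.1, a, p.2)) s =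
      ∫⁻ x, K (x, a) {y | (x, a, y) ∈ s} ∂μX := fun a => by
    rw [Measure.map_apply (hemb a) hs, Measure.compProd_apply (hemb a hs)]
    rfl
  have hmeas : ∀ a, Measurable fun x => K (x, a) {y | (x, a, y) ∈ s} := fun a =>
    Kernel.measurable_kernel_prodMk_left (κ := K.sectL a) (hemb a hs)
  rw [hP s hs, Measure.finsetSum_apply, Finset.sum_congr rfl fun a _ => hsummand a,
    lintegral_finsetSum _ fun a _ => hmeas a]

theorem integral_eq_integral_sum_integral [SFinite μX] [IsSFiniteKernel K]
    (hP : IsReferenceMeasure μX K P) {H : X × A × ℝ → ℝ} (hH : Integrable H P) :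
    ∫ o, H o ∂P = ∫ x, ∑ a, ∫ y, H (x, a, y) ∂K (x, a) ∂μX := by
  rw [hP.eq_sum_map_compProd] at hH ⊢
  have hHa := integrable_finsetSum_measure.mp hH
  have hcomp : ∀ a, Integrable (fun p : X × ℝ => H (p.1, a, p.2)) (μX ⊗ₘ K.sectL a) :=
    fun a => (hHa a (mem_univ a)).comp_measurable (by fun_prop)
  have hinner : ∀ a, Integrable (fun x => ∫ y, H (x, a, y) ∂K (x, a)) μX := fun a =>
    (hcomp a).integral_compProd
  rw [integral_finsetSum_measure hHa, integral_finsetSum _ fun a _ => hinner a]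
  refine Finset.sum_congr rfl fun a _ => ?_
  rw [integral_map (by fun_prop) (hHa a (mem_univ a)).aestronglyMeasurable,
    Measure.integral_compProd (hcomp a)]
  rfl

theorem isFiniteMeasure [IsProbabilityMeasure μX] [IsMarkovKernel K]
    (hP : IsReferenceMeasure μX K P) : IsFiniteMeasure P :=
  ⟨by simp [hP _ MeasurableSet.univ]⟩

theorem ae_abs_le {M : ℝ} (hP : IsReferenceMeasure μX K P)
    (hK : ∀ x a, ∀ᵐ y ∂K (x, a), |y| ≤ M) : ∀ᵐ o ∂P, |o.2.2| ≤ M := by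
  have hs : MeasurableSet {o : X × A × ℝ | ¬|o.2.2| ≤ M} :=
    (measurableSet_le measurable_snd.snd.abs measurable_const).compl
  have hnull : ∀ x a, K (x, a) {y | (x, a, y) ∈ {o : X × A × ℝ | ¬|o.2.2| ≤ M}} = 0 :=
    fun x a => ae_iff.mp (hK x a)
  simp only [ae_iff, hP _ hs, hnull, Finset.sum_const_zero, lintegral_zero]

theorem integrable_of_abs_le [IsProbabilityMeasure μX] [IsMarkovKernel K] {M B : ℝ}
    (hP : IsReferenceMeasure μX K P) (hK : ∀ x a, ∀ᵐ y ∂K (x, a), |y| ≤ M)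
    {H : X × A × ℝ → ℝ} (hH : Measurable H) (hHB : ∀ o, |o.2.2| ≤ M → |H o| ≤ B) :
    Integrable H P :=
  have := hP.isFiniteMeasure
  .of_bound hH.aestronglyMeasurable B ((hP.ae_abs_le hK).mono fun o ho => hHB o ho)

variable [IsProbabilityMeasure μX] [IsMarkovKernel K] {M : ℝ}

theorem integral_mul_eq (hP : IsReferenceMeasure μX K P)
    (hK : ∀ x a, ∀ᵐ y ∂K (x, a), |y| ≤ M) {g : X × A → ℝ} (hg : Measurable g)
    (hg1 : ∀ z, |g z| ≤ 1) :
    ∫ o, o.2.2 * g (o.1, o.2.1) ∂P = ∫ x, ∑ a, (∫ y, y ∂K (x, a)) * g (x, a) ∂μX := by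
  have hbound : ∀ o : X × A × ℝ, |o.2.2| ≤ M → |o.2.2 * g (o.1, o.2.1)| ≤ M := fun o ho => by
    rw [abs_mul]
    nlinarith [abs_nonneg o.2.2, abs_nonneg (g (o.1, o.2.1)), hg1 (o.1, o.2.1)]
  rw [hP.integral_eq_integral_sum_integral (hP.integrable_of_abs_le hK (by fun_prop) hbound)]
  simp_rw [integral_mul_const]

theorem integral_sq_mul_sub_le (hP : IsReferenceMeasure μX K P)
    (hK : ∀ x a, ∀ᵐ y ∂K (x, a), |y| ≤ M) {f g : X × A → ℝ} (hf : Measurable f) (hg : Measurable g)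
    (hfg : ∀ z, |f z - g z| ≤ 1) :
    ∫ o, (o.2.2 * f (o.1, o.2.1) - o.2.2 * g (o.1, o.2.1)) ^ 2 ∂P ≤
      M ^ 2 * ∫ x, ∑ a, (f (x, a) - g (x, a)) ^ 2 ∂μX := by
  have hsq : ∀ z, (f z - g z) ^ 2 ≤ 1 := fun z => by
    nlinarith [abs_nonneg (f z - g z), sq_abs (f z - g z), hfg z]
  have hbound : ∀ o : X × A × ℝ, |o.2.2| ≤ M →
      (o.2.2 * f (o.1, o.2.1) - o.2.2 * g (o.1, o.2.1)) ^ 2 ≤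
        M ^ 2 * (f (o.1, o.2.1) - g (o.1, o.2.1)) ^ 2 :=
    fun o ho => by
      rw [← mul_sub, mul_pow, ← sq_abs o.2.2]
      exact mul_le_mul_of_nonneg_right (pow_le_pow_left₀ (abs_nonneg _) ho 2) (sq_nonneg _)
  have hint : Integrable (fun o : X × A × ℝ => (f (o.1, o.2.1) - g (o.1, o.2.1)) ^ 2) P :=
    hP.integrable_of_abs_le hK (B := 1) (by fun_prop) fun o _ => by
      rw [abs_of_nonneg (sq_nonneg _)]; exact hsq _
  have hint' : Integrable
      (fun o : X × A × ℝ => (o.2.2 * f (o.1, o.2.1) - o.2.2 * g (o.1, o.2.1)) ^ 2) P :=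
    hP.integrable_of_abs_le hK (B := M ^ 2 * 1) (by fun_prop) fun o ho => by
      rw [abs_of_nonneg (sq_nonneg _)]
      exact (hbound o ho).trans (mul_le_mul_of_nonneg_left (hsq _) (sq_nonneg M))
  calc _ ≤ ∫ o, M ^ 2 * (f (o.1, o.2.1) - g (o.1, o.2.1)) ^ 2 ∂P :=
        integral_mono_ae hint' (hint.const_mul _) ((hP.ae_abs_le hK).mono hbound)
    _ = M ^ 2 * ∫ x, ∑ a, (f (x, a) - g (x, a)) ^ 2 ∂μX := by
        rw [integral_const_mul, hP.integral_eq_integral_sum_integral hint]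
        simp

theorem integral_sq_mul_sub_le_of_ae_eq_single [DecidableEq A] (hP : IsReferenceMeasure μX K P)
    (hK : ∀ x a, ∀ᵐ y ∂K (x, a), |y| ≤ M) {a₀ : X → A} (ha₀ : Measurable a₀) {p q : X × A → ℝ}
    (hp : IsPolicy p) (hq : IsPolicy q)
    (hq₀ : ∀ᵐ x ∂μX, (fun a => q (x, a)) = Pi.single (a₀ x) 1) :
    ∫ o, (o.2.2 * p (o.1, o.2.1) - o.2.2 * q (o.1, o.2.1)) ^ 2 ∂P ≤
      M ^ 2 * (2 * ∫ x, (1 - p (x, a₀ x)) ∂μX) :=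
  (hP.integral_sq_mul_sub_le hK hp.measurable hq.measurable (hp.abs_sub_le_one hq)).trans
    (mul_le_mul_of_nonneg_left (integral_sum_sq_sub_le ha₀ hp hq hq₀) (sq_nonneg M))

end IsReferenceMeasure

end PolicyLearning

open PolicyLearning

/-- **Variance bound from the margin condition.**

For every `ν ∈ (0,∞)`, `κ > 0` and cardinality `cardA` of the finite action set there is
a constant `C > 0` depending only on `ν`, `κ`, `cardA` such that, in the policy-learning
setting, under the margin assumption with parameters `ν, κ` and the realizability
condition `min_{f∈𝓕} R*(f) = ∫ μ* dμ_X` (attained at `f₁ ∈ 𝓕`), we have for all `f ∈ 𝓕`: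
`‖ℓ(f,·) − ℓ(f₁,·)‖_{2,g*} ≤ C M ((R*(f) − R*(f₁))/M)^{ν/(2(ν+1))}`. -/
theorem variance_bound_from_margin (ν κ : ℝ) (cardA : ℕ) (hν : 0 < ν) (hκ : 0 < κ) :
    ∃ C : ℝ, 0 < C ∧
    ∀ (𝒳 : Type) [m𝒳 : MeasurableSpace 𝒳]
      (𝒜 : Type) [m𝒜 : MeasurableSpace 𝒜] [inst𝒜 : Fintype 𝒜],
      Fintype.card 𝒜 = cardA →
    ∀ (M : ℝ), 0 < M →
    -- the context distribution and the outcome kernel, with outcomes in [−M, M]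
    ∀ (μX : Measure 𝒳) [IsProbabilityMeasure μX]
      (K : Kernel (𝒳 × 𝒜) ℝ) [IsMarkovKernel K],
      (∀ x a, ∀ᵐ y ∂(K (x, a)), |y| ≤ M) →
    -- the reference measure P* (corresponding to g* ≡ 1)
    ∀ Pstar : Measure (𝒳 × 𝒜 × ℝ),
      (∀ s : Set (𝒳 × 𝒜 × ℝ), MeasurableSet s →
        Pstar s = ∫⁻ x, ∑ a : 𝒜, K (x, a) {y | (x, a, y) ∈ s} ∂μX) →
    -- the mean-outcome function μ and the optimal-action selection a*
    ∀ μp : 𝒳 × 𝒜 → ℝ, (∀ z : 𝒳 × 𝒜, μp z = ∫ y, y ∂(K z)) →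
    ∀ astar : 𝒳 → 𝒜, Measurable astar →
      -- μ(x, a*(x)) = μ*(x) = min_a μ(x,a)
      (∀ x a, μp (x, astar x) ≤ μp (x, a)) →
    -- the margin assumption with parameters ν, κ
    (∀ u : ℝ, 0 ≤ u →
      μX {x | ∃ a, a ≠ astar x ∧ μp (x, a) - μp (x, astar x) ≤ M * u}
        ≤ ENNReal.ofReal ((κ * u) ^ ν)) →
    -- the policy class
    ∀ F : Set (𝒳 × 𝒜 → ℝ),
      (∀ f ∈ F, Measurable f) →
      (∀ f ∈ F, ∀ z : 𝒳 × 𝒜, f z ∈ Set.Icc (0 : ℝ) 1) →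
      (∀ f ∈ F, ∀ x : 𝒳, ∑ a : 𝒜, f (x, a) = 1) →
    -- realizability: min_{f∈𝓕} R*(f) = ∫ μ*(x) dμ_X(x), attained at f₁ ∈ 𝓕
    ∀ f1 ∈ F,
      ((∫ o : 𝒳 × 𝒜 × ℝ, o.2.2 * f1 (o.1, o.2.1) ∂Pstar) = ∫ x, μp (x, astar x) ∂μX) →
      (∀ f ∈ F,
        (∫ o : 𝒳 × 𝒜 × ℝ, o.2.2 * f1 (o.1, o.2.1) ∂Pstar)
          ≤ ∫ o : 𝒳 × 𝒜 × ℝ, o.2.2 * f (o.1, o.2.1) ∂Pstar) →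
    -- conclusion: the variance bound with exponent α = ν/(ν+1) and envelope M
    ∀ f ∈ F,
      Real.sqrt (∫ o : 𝒳 × 𝒜 × ℝ,
          (o.2.2 * f (o.1, o.2.1) - o.2.2 * f1 (o.1, o.2.1)) ^ 2 ∂Pstar)
        ≤ C * M *
          ((((∫ o : 𝒳 × 𝒜 × ℝ, o.2.2 * f (o.1, o.2.1) ∂Pstar)
              - ∫ o : 𝒳 × 𝒜 × ℝ, o.2.2 * f1 (o.1, o.2.1) ∂Pstar) / M)
            ^ (ν / (2 * (ν + 1)))) := by
  classical
  refine ⟨2 * κ ^ (ν / (2 * (ν + 1))), by positivity, ?_⟩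
  intro 𝒳 _ 𝒜 _ _ _ M hM μX _ K _ hK Pstar hP μp hμp astar hastar hopt hmargin F hFmeas hFbd
    hFsum f1 hf1F hreal hmin f hfF
  have hpol : ∀ g ∈ F, IsPolicy g := fun g hg =>
    ⟨hFmeas g hg, fun z => (hFbd g hg z).1, hFsum g hg⟩
  have hm : Measurable μp := funext hμp ▸ measurable_integral_id K
  have hmM : ∀ z, |μp z| ≤ M := fun z => hμp z ▸ abs_integral_id_le (hK z.1 z.2)
  have hexcess : ∀ g ∈ F, ∫ x, regret μp astar g x ∂μX =
      (∫ o, o.2.2 * g (o.1, o.2.1) ∂Pstar) - ∫ x, μp (x, astar x) ∂μX := fun g hg => by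
    rw [integral_regret hm hmM hastar (hpol g hg),
      IsReferenceMeasure.integral_mul_eq hP hK (hpol g hg).measurable (hpol g hg).abs_le_one]
    simp only [hμp]
  have hf1 := ae_eq_single_of_integral_regret_eq_zero hm hmM hastar hopt
    (MarginCondition.measure_marginSet_zero hmargin hν) (hpol f1 hf1F)
    (by rw [hexcess f1 hf1F, hreal, sub_self])
  have hL1 := MarginCondition.integral_one_sub_le hmargin hν hκ hM hm hmM hastar hopt (hpol f hfF)
  rw [hexcess f hfF, ← hreal] at hL1
  set s := ((∫ o, o.2.2 * f (o.1, o.2.1) ∂Pstar) - ∫ o, o.2.2 * f1 (o.1, o.2.1) ∂Pstar) / M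
  have hs : 0 ≤ s := div_nonneg (sub_nonneg.2 (hmin f hfF)) hM.le
  calc _ ≤ √(M ^ 2 * (2 * ∫ x, (1 - f (x, astar x)) ∂μX)) := Real.sqrt_le_sqrt
        (IsReferenceMeasure.integral_sq_mul_sub_le_of_ae_eq_single hP hK hastar (hpol f hfF)
          (hpol f1 hf1F) hf1)
    _ ≤ √((2 * M) ^ 2 * (κ * s) ^ (ν / (ν + 1))) := Real.sqrt_le_sqrt (by nlinarith)
    _ = _ := by
      rw [sqrt_sq_mul_rpow (by positivity) (by positivity), Real.mul_rpow hκ.le hs]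
      ring
end

section
/- Let (Ω, Σ, P) be a probability space, let B ∈ Σ be an event, and let Δ, G : Ω → [0,∞) be random variables such that G ≥ Δ · 1_B almost surely. Let M, κ > 0 and ν ∈ (0,∞), and suppose that for all u > 0: P(Δ ≤ u) ≤ (κ u / M)^ν. Then P(B) ≤ ν^{−ν/(ν+1)} (ν+1) ( (κ/M) E[G] )^{ν/(ν+1)}. -/
open MeasureTheory

/-- **Key probabilistic step from margin condition to variance bound.**

If `G ≥ Δ · 1_B` a.s., `Δ, G ≥ 0`, and `P(Δ ≤ u) ≤ (κ u / M)^ν` for all `u > 0`, then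
`P(B) ≤ ν^{−ν/(ν+1)} (ν+1) ((κ/M) E[G])^{ν/(ν+1)}`. -/
theorem margin_event_probability_bound
    (Ω : Type) [mΩ : MeasurableSpace Ω] (P : Measure Ω) [IsProbabilityMeasure P]
    (B : Set Ω) (hB : MeasurableSet B)
    (Δ G : Ω → ℝ)
    (hΔ0 : ∀ ω, 0 ≤ Δ ω) (hG0 : ∀ ω, 0 ≤ G ω)
    (hGint : Integrable G P)
    (hdom : ∀ᵐ ω ∂P, B.indicator Δ ω ≤ G ω)
    (M κ ν : ℝ) (hM : 0 < M) (hκ : 0 < κ) (hν : 0 < ν)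
    (hmargin : ∀ u : ℝ, 0 < u →
      P {ω | Δ ω ≤ u} ≤ ENNReal.ofReal ((κ * u / M) ^ ν)) :
    (P B).toReal
      ≤ ν ^ (-(ν / (ν + 1))) * (ν + 1) * ((κ / M) * ∫ ω, G ω ∂P) ^ (ν / (ν + 1)) := by
  set b : ℝ := ∫ ω, G ω ∂P with hb
  have hb0 : 0 ≤ b := integral_nonneg hG0
  have hc : (0:ℝ) < κ / M := div_pos hκ hM
  have hν1 : (0:ℝ) < ν + 1 := by linarith
  -- key inequality for every u > 0
  have key : ∀ u : ℝ, 0 < u → (P B).toReal ≤ (κ * u / M) ^ ν + b / u := by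
    intro u hu
    have hsub : P B ≤ P ({ω | Δ ω ≤ u} ∪ {ω | u ≤ G ω}) := by
      apply measure_mono_ae
      filter_upwards [hdom] with ω h hωB
      rcases le_or_gt (Δ ω) u with h1 | h1
      · exact Or.inl h1
      · refine Or.inr ?_
        have : Δ ω ≤ G ω := by simpa [Set.indicator_of_mem hωB] using h
        exact le_trans h1.le this
    have h1 : (P B).toReal ≤ (P {ω | Δ ω ≤ u}).toReal + (P {ω | u ≤ G ω}).toReal := by
      have h2 := le_trans hsub (measure_union_le _ _)
      calc (P B).toReal ≤ (P {ω | Δ ω ≤ u} + P {ω | u ≤ G ω}).toReal :=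
            ENNReal.toReal_mono (by finiteness) h2
        _ = _ := ENNReal.toReal_add (measure_ne_top _ _) (measure_ne_top _ _)
    have hA : (P {ω | Δ ω ≤ u}).toReal ≤ (κ * u / M) ^ ν := by
      refine ENNReal.toReal_le_of_le_ofReal (by positivity) (hmargin u hu)
    have hB2 : (P {ω | u ≤ G ω}).toReal ≤ b / u := by
      rw [le_div_iff₀ hu, mul_comm]
      exact mul_meas_ge_le_integral_of_nonneg (ae_of_all _ hG0) hGint u
    linarith
  rcases eq_or_lt_of_le hb0 with hb0' | hbpos
  · -- b = 0 case
    have hrhs : ν ^ (-(ν / (ν + 1))) * (ν + 1) * ((κ / M) * b) ^ (ν / (ν + 1)) = 0 := by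
      rw [← hb0', mul_zero, Real.zero_rpow (by positivity), mul_zero]
    rw [hrhs]
    have hle0 : (P B).toReal ≤ 0 := by
      refine le_of_forall_pos_le_add ?_
      intro ε hε
      have hu : (0:ℝ) < M * ε ^ ν⁻¹ / κ := by positivity
      have hkey := key _ hu
      have heq : κ * (M * ε ^ ν⁻¹ / κ) / M = ε ^ ν⁻¹ := by field_simp
      rw [heq, ← hb0', zero_div, add_zero, ← Real.rpow_mul hε.le,
        inv_mul_cancel₀ hν.ne', Real.rpow_one] at hkey
      linarith
    exact hle0
  · -- b > 0 case
    set c : ℝ := κ / M with hcdef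
    set q : ℝ := (ν + 1)⁻¹ with hq
    set p : ℝ := ν / (ν + 1) with hp
    set u : ℝ := (b / (ν * c ^ ν)) ^ q with hudef
    have hu : 0 < u := Real.rpow_pos_of_pos (by positivity) _
    have hcu : κ * u / M = c * u := by rw [hcdef]; ring
    have hlogu : Real.log u = q * (Real.log b - (Real.log ν + ν * Real.log c)) := by
      rw [hudef, Real.log_rpow (by positivity), Real.log_div (by positivity) (by positivity),
        Real.log_mul hν.ne' (by positivity), Real.log_rpow hc]
    have hX : (0:ℝ) < ν ^ (-p) * (c * b) ^ p := by positivity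
    have hrhslog : Real.log (ν ^ (-p) * (c * b) ^ p)
        = -p * Real.log ν + p * (Real.log c + Real.log b) := by
      rw [Real.log_mul (by positivity) (by positivity), Real.log_rpow hν,
        Real.log_rpow (by positivity), Real.log_mul hc.ne' hbpos.ne']
    have hterm1 : (c * u) ^ ν = ν ^ (-p) * (c * b) ^ p := by
      apply Real.log_injOn_pos (Set.mem_Ioi.2 (by positivity)) (Set.mem_Ioi.2 hX)
      have hlhs : Real.log ((c * u) ^ ν)
          = ν * (Real.log c + q * (Real.log b - (Real.log ν + ν * Real.log c))) := by
        rw [Real.log_rpow (by positivity), Real.log_mul hc.ne' hu.ne', hlogu]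
      rw [hlhs, hrhslog, hp, hq]
      field_simp
      ring
    have hterm2 : b / u = ν * (ν ^ (-p) * (c * b) ^ p) := by
      apply Real.log_injOn_pos (Set.mem_Ioi.2 (by positivity)) (Set.mem_Ioi.2 (by positivity))
      have hlhs : Real.log (b / u)
          = Real.log b - q * (Real.log b - (Real.log ν + ν * Real.log c)) := by
        rw [Real.log_div hbpos.ne' hu.ne', hlogu]
      rw [hlhs, Real.log_mul hν.ne' hX.ne', hrhslog, hp, hq]
      field_simp
      ring
    have hk := key u hu
    rw [hcu, hterm1, hterm2] at hk
    calc (P B).toReal ≤ ν ^ (-p) * (c * b) ^ p + ν * (ν ^ (-p) * (c * b) ^ p) := hk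
      _ = ν ^ (-p) * (ν + 1) * (c * b) ^ p := by ring
end
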